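/- The homogenized elasticity tensor defined by Ĉ_{ijkl} = (1/|Q|) ∫_Q [ C_{ijkl}(β) + C_{ijmn}(β) ∂N_n^{kl}(β)/∂β_m ] dQ satisfies the symmetry Ĉ_{ijkl} = Ĉ_{klij}. -/

import Mathlib

open MeasureTheory

noncomputable section

/-- Partial derivative of a scalar field on `Fin 3 → ℝ` in direction `i`. -/
def pd (f : (Fin 3 → ℝ) → ℝ) (i : Fin 3) (x : Fin 3 → ℝ) : ℝ :=
  fderiv ℝ f x (Pi.single i 1)

/-- The unit cell `Q = (0,1)³`. -/
def Qcell : Set (Fin 3 → ℝ) := {β | ∀ i, β i ∈ Set.Ioo (0:ℝ) 1}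

/-- 1-periodicity in each coordinate direction. -/
def Per (f : (Fin 3 → ℝ) → ℝ) : Prop :=
  ∀ x : Fin 3 → ℝ, ∀ i : Fin 3, f (x + Pi.single i 1) = f x

/-- The class of admissible (periodic, `C¹`, zero-mean over the cell) vector fields. -/
def Admissible (N : (Fin 3 → ℝ) → Fin 3 → ℝ) : Prop :=
  (∀ i, ContDiff ℝ 1 (fun β => N β i)) ∧ (∀ i, Per (fun β => N β i)) ∧
    (∀ i, ∫ β in Qcell, N β i = 0)

lemma Qcell_eq_pi : Qcell = Set.pi Set.univ (fun _ : Fin 3 => Set.Ioo (0:ℝ) 1) := by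
  ext β; simp [Qcell, Set.mem_pi]

lemma Qcell_measurable : MeasurableSet Qcell := by
  rw [Qcell_eq_pi]
  exact MeasurableSet.univ_pi fun _ => measurableSet_Ioo

lemma Qcell_volume : volume Qcell = 1 := by
  rw [Qcell_eq_pi, volume_pi_pi]
  simp

lemma Qcell_subset : Qcell ⊆ Set.pi Set.univ (fun _ : Fin 3 => Set.Icc (0:ℝ) 1) := by
  intro β hβ
  rw [Set.mem_pi]
  intro i _
  exact Set.Ioo_subset_Icc_self (hβ i)

/-- Integrability of a bounded measurable function on the unit cell. -/
lemma integrableOn_Qcell {f : (Fin 3 → ℝ) → ℝ} (hm : Measurable f)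
    (hb : ∃ M : ℝ, ∀ β ∈ Qcell, |f β| ≤ M) : IntegrableOn f Qcell volume := by
  obtain ⟨M, hM⟩ := hb
  refine Measure.integrableOn_of_bounded (M := M) ?_ hm.aestronglyMeasurable ?_
  · rw [Qcell_volume]; exact ENNReal.one_ne_top
  · exact (ae_restrict_iff' Qcell_measurable).2 (Filter.Eventually.of_forall fun β hβ => hM β hβ)

/-- Continuity of `pd f i` for a `C¹` function `f`. -/
lemma pd_continuous {f : (Fin 3 → ℝ) → ℝ} (hf : ContDiff ℝ 1 f) (i : Fin 3) :
    Continuous (pd f i) :=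
  (hf.continuous_fderiv one_ne_zero).clm_apply continuous_const

/-- Swap the first pair of summation indices with the second pair. -/
lemma sum4_swap (T : Fin 3 → Fin 3 → Fin 3 → Fin 3 → ℝ) :
    (∑ a, ∑ b, ∑ p, ∑ q, T a b p q) = ∑ p, ∑ q, ∑ a, ∑ b, T a b p q := by
  calc (∑ a, ∑ b, ∑ p, ∑ q, T a b p q)
      = ∑ a, ∑ p, ∑ b, ∑ q, T a b p q :=
        Finset.sum_congr rfl fun a _ => Finset.sum_comm
    _ = ∑ p, ∑ a, ∑ b, ∑ q, T a b p q := Finset.sum_comm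
    _ = ∑ p, ∑ a, ∑ q, ∑ b, T a b p q :=
        Finset.sum_congr rfl fun p _ => Finset.sum_congr rfl fun a _ => Finset.sum_comm
    _ = ∑ p, ∑ q, ∑ a, ∑ b, T a b p q :=
        Finset.sum_congr rfl fun p _ => Finset.sum_comm

/-- the homogenized elasticity tensor
`Ĉ_{ijkl} = (1/|Q|) ∫_Q [C_{ijkl} + C_{ijmn} ∂N_n^{kl}/∂β_m] dQ`
satisfies the symmetry `Ĉ_{ijkl} = Ĉ_{klij}`. -/
theorem stmt2
    (C : (Fin 3 → ℝ) → Fin 3 → Fin 3 → Fin 3 → Fin 3 → ℝ)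
    (hCmeas : ∀ i j k l, Measurable (fun β => C β i j k l))
    (hCbound : ∃ M : ℝ, ∀ β i j k l, |C β i j k l| ≤ M)
    (hCsym : ∀ β i j k l, C β i j k l = C β j i k l ∧ C β i j k l = C β i j l k ∧
      C β i j k l = C β k l i j)
    (hell : ∃ lam : ℝ, 0 < lam ∧ ∀ (β : Fin 3 → ℝ) (ξ : Matrix (Fin 3) (Fin 3) ℝ),
      ξ.IsSymm → lam * (∑ i, ∑ j, ξ i j ^ 2) ≤ ∑ i, ∑ j, ∑ k, ∑ l, C β i j k l * ξ i j * ξ k l)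
    (N : Fin 3 → Fin 3 → (Fin 3 → ℝ) → Fin 3 → ℝ)
    (hNadm : ∀ k l, Admissible (N k l))
    (hNsol : ∀ (k l : Fin 3), ∀ v : (Fin 3 → ℝ) → Fin 3 → ℝ, Admissible v →
      (∫ β in Qcell, ∑ i, ∑ j, ∑ p, ∑ q,
          C β i j p q * pd (fun b => N k l b p) q β * pd (fun b => v b i) j β)
        = -∫ β in Qcell, ∑ i, ∑ j, C β i j k l * pd (fun b => v b i) j β)
    (Chat : Fin 3 → Fin 3 → Fin 3 → Fin 3 → ℝ)
    (hChat : ∀ i j k l, Chat i j k l = (volume Qcell).toReal⁻¹ *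
      ∫ β in Qcell, (C β i j k l + ∑ m, ∑ n, C β i j m n * pd (fun b => N k l b n) m β)) :
    ∀ i j k l, Chat i j k l = Chat k l i j := by
  intro i j k l
  obtain ⟨M, hM⟩ := hCbound
  -- integrability facts
  have hMnn : 0 ≤ M := le_trans (abs_nonneg _) (hM 0 i j k l)
  have hIccC : IsCompact (Set.pi Set.univ (fun _ : Fin 3 => Set.Icc (0:ℝ) 1)) :=
    isCompact_univ_pi fun _ => isCompact_Icc
  have hintC : ∀ a b c d : Fin 3, IntegrableOn (fun β => C β a b c d) Qcell volume :=
    fun a b c d => integrableOn_Qcell (hCmeas a b c d) ⟨M, fun β _ => hM β a b c d⟩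
  have hintg : ∀ k' l' i' j' : Fin 3, IntegrableOn
      (fun β => ∑ m, ∑ n, C β i' j' m n * pd (fun b => N k' l' b n) m β) Qcell volume := by
    intro k' l' i' j'
    have : ∀ m ∈ (Finset.univ : Finset (Fin 3)), IntegrableOn
        (fun β => ∑ n, C β i' j' m n * pd (fun b => N k' l' b n) m β) Qcell volume := by
      intro m _
      have : ∀ n ∈ (Finset.univ : Finset (Fin 3)), IntegrableOn
          (fun β => C β i' j' m n * pd (fun b => N k' l' b n) m β) Qcell volume := by
        intro n _
        have hcont : Continuous (pd (fun b => N k' l' b n) m) :=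
          pd_continuous ((hNadm k' l').1 n) m
        obtain ⟨K, hK⟩ := hIccC.exists_bound_of_continuousOn hcont.continuousOn
        refine integrableOn_Qcell ((hCmeas i' j' m n).mul hcont.measurable) ⟨M * K, ?_⟩
        intro β hβ
        rw [abs_mul]
        exact mul_le_mul (hM β i' j' m n) (hK β (Qcell_subset hβ)) (abs_nonneg _) hMnn
      exact integrable_finset_sum _ this
    exact integrable_finset_sum _ this
  -- pointwise equality of the bilinear forms
  have big : ∀ β : Fin 3 → ℝ,
      (∑ a, ∑ b, ∑ p, ∑ q,
        C β a b p q * pd (fun x => N k l x p) q β * pd (fun x => N i j x a) b β)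
      = ∑ a, ∑ b, ∑ p, ∑ q,
        C β a b p q * pd (fun x => N i j x p) q β * pd (fun x => N k l x a) b β := by
    intro β
    have h1 : (∑ a, ∑ b, ∑ p, ∑ q,
        C β a b p q * pd (fun x => N k l x p) q β * pd (fun x => N i j x a) b β)
        = ∑ a, ∑ b, ∑ p, ∑ q,
          C β p q a b * pd (fun x => N k l x p) q β * pd (fun x => N i j x a) b β := by
      refine Finset.sum_congr rfl fun a _ => Finset.sum_congr rfl fun b _ =>
        Finset.sum_congr rfl fun p _ => Finset.sum_congr rfl fun q _ => ?_
      rw [(hCsym β a b p q).2.2]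
    rw [h1, sum4_swap]
    refine Finset.sum_congr rfl fun a _ => Finset.sum_congr rfl fun b _ =>
      Finset.sum_congr rfl fun p _ => Finset.sum_congr rfl fun q _ => ?_
    ring
  have h1 := hNsol k l (N i j) (hNadm i j)
  have h2 := hNsol i j (N k l) (hNadm k l)
  have hbig : (∫ β in Qcell, ∑ a, ∑ b, ∑ p, ∑ q,
        C β a b p q * pd (fun x => N k l x p) q β * pd (fun x => N i j x a) b β)
      = ∫ β in Qcell, ∑ a, ∑ b, ∑ p, ∑ q,
        C β a b p q * pd (fun x => N i j x p) q β * pd (fun x => N k l x a) b β :=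
    integral_congr_ae (Filter.Eventually.of_forall big)
  have E1 : (∫ β in Qcell, ∑ a, ∑ b, C β a b k l * pd (fun x => N i j x a) b β)
      = ∫ β in Qcell, ∑ a, ∑ b, C β a b i j * pd (fun x => N k l x a) b β := by
    have := h1.symm.trans (hbig.trans h2)
    exact neg_injective this
  -- pointwise rewriting of the gradient terms
  have gpt1 : ∀ β : Fin 3 → ℝ, (∑ m, ∑ n, C β i j m n * pd (fun x => N k l x n) m β)
      = ∑ a, ∑ b, C β a b i j * pd (fun x => N k l x a) b β := by
    intro β
    have h : (∑ m, ∑ n, C β i j m n * pd (fun x => N k l x n) m β)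
        = ∑ m, ∑ n, C β n m i j * pd (fun x => N k l x n) m β := by
      refine Finset.sum_congr rfl fun m _ => Finset.sum_congr rfl fun n _ => ?_
      rw [(hCsym β i j m n).2.2, (hCsym β m n i j).1]
    rw [h]
    exact Finset.sum_comm
  have gpt2 : ∀ β : Fin 3 → ℝ, (∑ m, ∑ n, C β k l m n * pd (fun x => N i j x n) m β)
      = ∑ a, ∑ b, C β a b k l * pd (fun x => N i j x a) b β := by
    intro β
    have h : (∑ m, ∑ n, C β k l m n * pd (fun x => N i j x n) m β)
        = ∑ m, ∑ n, C β n m k l * pd (fun x => N i j x n) m β := by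
      refine Finset.sum_congr rfl fun m _ => Finset.sum_congr rfl fun n _ => ?_
      rw [(hCsym β k l m n).2.2, (hCsym β m n k l).1]
    rw [h]
    exact Finset.sum_comm
  -- assemble
  rw [hChat i j k l, hChat k l i j]
  congr 1
  rw [integral_add (hintC i j k l) (hintg k l i j),
    integral_add (hintC k l i j) (hintg i j k l)]
  congr 1
  · exact integral_congr_ae (Filter.Eventually.of_forall fun β => (hCsym β i j k l).2.2)
  · calc (∫ β in Qcell, ∑ m, ∑ n, C β i j m n * pd (fun b => N k l b n) m β)
        = ∫ β in Qcell, ∑ a, ∑ b, C β a b i j * pd (fun x => N k l x a) b β :=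
          integral_congr_ae (Filter.Eventually.of_forall gpt1)
      _ = ∫ β in Qcell, ∑ a, ∑ b, C β a b k l * pd (fun x => N i j x a) b β := E1.symm
      _ = ∫ β in Qcell, ∑ m, ∑ n, C β k l m n * pd (fun b => N i j b n) m β :=
          (integral_congr_ae (Filter.Eventually.of_forall gpt2)).symm
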